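/- arXiv:1806.05168 — 2 statements merged into one kernel-verified Lean document; each statement's English description precedes it below -/
import Mathlib

section
/- Let K be a field, let V be a finite-dimensional K-vector space with an internal direct sum decomposition V = V_l ⊕ V_u, and let ν, β : V → V be linear maps such that: ν vanishes on V_u and restricts to an isomorphism from V_l onto V_u; β vanishes on V_l and maps V_u into V_l. Then rank(β ∘ ν + ν ∘ β) = 2 · rank(β). -/
/-- Let `K` be a field, `V` a finite-dimensional `K`-vector space with an
internal direct sum decomposition `V = Vl ⊕ Vu`, and `ν, β : V → V` linear maps such that:
`ν` vanishes on `Vu` and restricts to an isomorphism from `Vl` onto `Vu`; `β` vanishes on `Vl`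
and maps `Vu` into `Vl`. Then `rank (β ∘ ν + ν ∘ β) = 2 * rank β`. -/
theorem rank_anticommutator_eq_two_mul_rank
    (K V : Type) [Field K] [AddCommGroup V] [Module K V] [FiniteDimensional K V]
    (Vl Vu : Submodule K V) (hcompl : IsCompl Vl Vu)
    (ν β : V →ₗ[K] V)
    (hν_u : ∀ x ∈ Vu, ν x = 0)
    (hν_map : Submodule.map ν Vl = Vu)
    (hν_inj : ∀ x ∈ Vl, ν x = 0 → x = 0)
    (hβ_l : ∀ x ∈ Vl, β x = 0)
    (hβ_u : ∀ x ∈ Vu, β x ∈ Vl) :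
    Module.finrank K (LinearMap.range (β ∘ₗ ν + ν ∘ₗ β))
      = 2 * Module.finrank K (LinearMap.range β) := by
  classical
  set R := LinearMap.range β with hR
  -- decomposition of arbitrary vectors
  have hdecomp : ∀ x : V, ∃ l ∈ Vl, ∃ u ∈ Vu, x = l + u := by
    intro x
    have hx : x ∈ Vl ⊔ Vu := by rw [hcompl.sup_eq_top]; trivial
    rcases Submodule.mem_sup.mp hx with ⟨l, hl, u, hu, h⟩
    exact ⟨l, hl, u, hu, h.symm⟩
  -- R ≤ Vl
  have hRVl : R ≤ Vl := by
    rintro _ ⟨x, rfl⟩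
    rcases hdecomp x with ⟨l, hl, u, hu, rfl⟩
    rw [map_add, hβ_l l hl, zero_add]
    exact hβ_u u hu
  -- map ν R ≤ Vu
  have hνRVu : Submodule.map ν R ≤ Vu := by
    rintro _ ⟨y, hy, rfl⟩
    rw [← hν_map]
    exact Submodule.mem_map_of_mem (hRVl hy)
  -- range of D equals R ⊔ map ν R
  have hrange : LinearMap.range (β ∘ₗ ν + ν ∘ₗ β) = R ⊔ Submodule.map ν R := by
    apply le_antisymm
    · rintro _ ⟨x, rfl⟩
      simp only [LinearMap.add_apply, LinearMap.comp_apply]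
      exact Submodule.add_mem_sup (LinearMap.mem_range_self β (ν x))
        (Submodule.mem_map_of_mem (LinearMap.mem_range_self β x))
    · apply sup_le
      · rintro _ ⟨x, rfl⟩
        rcases hdecomp x with ⟨l, hl, u, hu, rfl⟩
        have hβx : β (l + u) = β u := by rw [map_add, hβ_l l hl, zero_add]
        -- find l' ∈ Vl with ν l' = u
        have hu' : u ∈ Submodule.map ν Vl := by rw [hν_map]; exact hu
        rcases hu' with ⟨l', hl', hνl'⟩
        refine ⟨l', ?_⟩
        simp only [LinearMap.add_apply, LinearMap.comp_apply, hνl', hβ_l l' hl',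
          map_zero, add_zero, hβx]
      · rintro _ ⟨_, ⟨x, rfl⟩, rfl⟩
        rcases hdecomp x with ⟨l, hl, u, hu, rfl⟩
        have hβx : β (l + u) = β u := by rw [map_add, hβ_l l hl, zero_add]
        refine ⟨u, ?_⟩
        simp only [LinearMap.add_apply, LinearMap.comp_apply, hν_u u hu, map_zero,
          zero_add, hβx]
  -- the two pieces are disjoint
  have hdisj : R ⊓ Submodule.map ν R = ⊥ := by
    apply le_antisymm _ bot_le
    intro x hx
    have : x ∈ Vl ⊓ Vu := ⟨hRVl hx.1, hνRVu hx.2⟩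
    rwa [hcompl.inf_eq_bot] at this
  -- finrank of the image of R under ν equals finrank R
  have hfr : Module.finrank K (Submodule.map ν R) = Module.finrank K R := by
    have hinj : Function.Injective (ν ∘ₗ R.subtype) := by
      rw [← LinearMap.ker_eq_bot]
      apply le_antisymm _ bot_le
      rintro ⟨x, hx⟩ hker
      have : ν x = 0 := hker
      have := hν_inj x (hRVl hx) this
      exact Subtype.ext this
    have hrg : LinearMap.range (ν ∘ₗ R.subtype) = Submodule.map ν R := by
      rw [LinearMap.range_comp, Submodule.range_subtype]
    rw [← hrg]
    exact LinearMap.finrank_range_of_inj hinj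
  rw [hrange]
  have := Submodule.finrank_sup_add_finrank_inf_eq R (Submodule.map ν R)
  rw [hdisj, finrank_bot, add_zero] at this
  rw [this, hfr]
  ring
end

section
/- Let A = (Z/2)[X]/(X²), a free Z/2-module with basis {1, X}, let ν : A → A be the Z/2-linear map with ν(1) = 0 and ν(X) = 1, and for n ≥ 1 let ν_n : A^{⊗n} → A^{⊗n} be the Z/2-linear map ν_n = Σ_{i=1}^n id^{⊗(i−1)} ⊗ ν ⊗ id^{⊗(n−i)}. Then the two-term complex defined by ν_n is acyclic: ker(ν_n) = range(ν_n). -/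
open TensorProduct Polynomial

/-- `A = (ℤ/2)[X]/(X²)`, the ring of truncated polynomials over `ℤ/2`;
as a `ℤ/2`-module it is free with basis `{1, X}`. -/
noncomputable abbrev TruncPoly2 : Type := AdjoinRoot (X ^ 2 : (ZMod 2)[X])

/-- The class of `X` in `A = (ℤ/2)[X]/(X²)`. -/
noncomputable def XX : TruncPoly2 := AdjoinRoot.root _

/-- `ν_n = Σ_{i=1}^n id^{⊗(i−1)} ⊗ ν ⊗ id^{⊗(n−i)}` on the `n`-fold tensor power `A^{⊗n}`. -/
noncomputable def nuN (n : ℕ) (ν : TruncPoly2 →ₗ[ZMod 2] TruncPoly2) :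
    (⨂[ZMod 2] _ : Fin n, TruncPoly2) →ₗ[ZMod 2] ⨂[ZMod 2] _ : Fin n, TruncPoly2 :=
  ∑ i : Fin n, PiTensorProduct.map
    (Function.update (fun _ : Fin n => (LinearMap.id : TruncPoly2 →ₗ[ZMod 2] TruncPoly2)) i ν)

private lemma add_self_zero' {M : Type*} [AddCommMonoid M] [Module (ZMod 2) M] (x : M) :
    x + x = 0 := by
  have h := two_smul (ZMod 2) x
  rw [show (2 : ZMod 2) = 0 from rfl, zero_smul] at h
  exact h.symm

private lemma XX_sq : XX * XX = 0 := by
  have h := AdjoinRoot.mk_self (f := (X ^ 2 : (ZMod 2)[X]))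
  rw [map_pow, AdjoinRoot.mk_X] at h
  rw [show XX * XX = XX ^ 2 from (sq XX).symm]
  exact h

private lemma truncpoly_hom_ext {f g : TruncPoly2 →ₗ[ZMod 2] TruncPoly2}
    (h1 : f 1 = g 1) (hX : f XX = g XX) : f = g := by
  have hm : (X ^ 2 : (ZMod 2)[X]).Monic := monic_X_pow 2
  apply (AdjoinRoot.powerBasis' hm).basis.ext
  intro i
  rw [(AdjoinRoot.powerBasis' hm).basis_eq_pow]
  have hdim : i.1 < 2 := by
    have := i.2
    simpa [natDegree_X_pow] using this
  interval_cases hi : i.1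
  · simpa [AdjoinRoot.powerBasis'] using h1
  · simpa [AdjoinRoot.powerBasis', XX] using hX

-- abbreviation for `Function.update (fun _ => id)`
private noncomputable def uu (n : ℕ) (i : Fin n) (g : TruncPoly2 →ₗ[ZMod 2] TruncPoly2) :
    Fin n → TruncPoly2 →ₗ[ZMod 2] TruncPoly2 :=
  Function.update (fun _ : Fin n => (LinearMap.id : TruncPoly2 →ₗ[ZMod 2] TruncPoly2)) i g

private lemma uu_comp_same (n : ℕ) (i : Fin n) (a b : TruncPoly2 →ₗ[ZMod 2] TruncPoly2) :
    (fun j => uu n i a j ∘ₗ uu n i b j) = uu n i (a ∘ₗ b) := by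
  funext j
  by_cases hj : j = i
  · subst hj; simp [uu]
  · simp [uu, Function.update_apply, hj]

private lemma uu_comp_comm (n : ℕ) {i k : Fin n} (hik : i ≠ k)
    (a b : TruncPoly2 →ₗ[ZMod 2] TruncPoly2) :
    (fun j => uu n i a j ∘ₗ uu n k b j) = (fun j => uu n k b j ∘ₗ uu n i a j) := by
  funext j
  by_cases hji : j = i
  · subst hji; simp [uu, Function.update_apply, hik, Ne.symm hik]
  · by_cases hjk : j = k
    · subst hjk; simp [uu, Function.update_apply, hji, Ne.symm hik]
    · simp [uu, Function.update_apply, hji, hjk]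

private lemma sum_comp'' {M : Type*} [AddCommMonoid M] [Module (ZMod 2) M] {ι : Type*}
    (s : Finset ι) (f : ι → M →ₗ[ZMod 2] M) (g : M →ₗ[ZMod 2] M) :
    (∑ i ∈ s, f i) ∘ₗ g = ∑ i ∈ s, f i ∘ₗ g := by
  simp only [← Module.End.mul_eq_comp]
  exact Finset.sum_mul ..

private lemma comp_sum'' {M : Type*} [AddCommMonoid M] [Module (ZMod 2) M] {ι : Type*}
    (s : Finset ι) (f : ι → M →ₗ[ZMod 2] M) (g : M →ₗ[ZMod 2] M) :
    g ∘ₗ (∑ i ∈ s, f i) = ∑ i ∈ s, g ∘ₗ f i := by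
  simp only [← Module.End.mul_eq_comp]
  exact Finset.mul_sum ..

private lemma map_uu_zero (n : ℕ) (i : Fin n) :
    PiTensorProduct.map (uu n i (0 : TruncPoly2 →ₗ[ZMod 2] TruncPoly2)) = 0 := by
  have h := PiTensorProduct.map_update_smul
    (f := fun _ : Fin n => (LinearMap.id : TruncPoly2 →ₗ[ZMod 2] TruncPoly2))
    i (0 : ZMod 2) (0 : TruncPoly2 →ₗ[ZMod 2] TruncPoly2)
  simpa [uu] using h

/-- Let `A = (ℤ/2)[X]/(X²)`, let `ν : A → A` be the `ℤ/2`-linear map with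
`ν 1 = 0`, `ν X = 1`, and for `n ≥ 1` let `ν_n : A^{⊗n} → A^{⊗n}` be the sum of all the ways
of applying `ν` to one tensor factor.  Then the two-term complex defined by `ν_n` is acyclic:
`ker ν_n = range ν_n`. -/
theorem nuN_acyclic (n : ℕ) (hn : 1 ≤ n)
    (ν : TruncPoly2 →ₗ[ZMod 2] TruncPoly2) (hν1 : ν 1 = 0) (hνX : ν XX = 1) :
    LinearMap.ker (nuN n ν) = LinearMap.range (nuN n ν) := by
  classical
  -- the local homotopy: multiplication by X
  set h : TruncPoly2 →ₗ[ZMod 2] TruncPoly2 := LinearMap.mulLeft (ZMod 2) XX with hh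
  have hom : ν ∘ₗ h + h ∘ₗ ν = LinearMap.id := by
    apply truncpoly_hom_ext
    · simp [hh, hν1, hνX]
    · simp [hh, hν1, hνX, XX_sq]
  have hνν : ν ∘ₗ ν = (0 : TruncPoly2 →ₗ[ZMod 2] TruncPoly2) := by
    apply truncpoly_hom_ext
    · simp [hν1]
    · simp [hνX, hν1]
  set i0 : Fin n := ⟨0, hn⟩ with hi0
  set H := PiTensorProduct.map (uu n i0 h) with hH
  have hD : nuN n ν = ∑ i : Fin n, PiTensorProduct.map (uu n i ν) := rfl
  -- the homotopy identity
  have key : nuN n ν ∘ₗ H + H ∘ₗ nuN n ν = LinearMap.id := by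
    rw [hD, sum_comp'', comp_sum'', ← Finset.sum_add_distrib]
    rw [Finset.sum_eq_single_of_mem i0 (Finset.mem_univ i0)]
    · rw [hH, ← PiTensorProduct.map_comp, ← PiTensorProduct.map_comp,
        uu_comp_same, uu_comp_same]
      unfold uu
      rw [← PiTensorProduct.map_update_add, hom]
      have hup : Function.update
          (fun _ : Fin n => (LinearMap.id : TruncPoly2 →ₗ[ZMod 2] TruncPoly2)) i0
          LinearMap.id = fun _ : Fin n => LinearMap.id :=
        Function.update_eq_self i0 _
      rw [hup, PiTensorProduct.map_id]
    · intro i _ hi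
      rw [hH, ← PiTensorProduct.map_comp, ← PiTensorProduct.map_comp,
        uu_comp_comm n hi]
      exact add_self_zero' _
  -- ν_n squared is zero
  have sq0 : nuN n ν ∘ₗ nuN n ν = 0 := by
    rw [hD, sum_comp'']
    simp_rw [comp_sum'', ← PiTensorProduct.map_comp]
    rw [← Finset.sum_product']
    apply Finset.sum_involution (fun p _ => Prod.swap p)
    · intro p _
      by_cases hp : p.1 = p.2
      · obtain ⟨i, k⟩ := p
        simp only at hp
        subst hp
        rw [uu_comp_same, hνν, map_uu_zero, Prod.swap]
        simp [uu_comp_same, hνν, map_uu_zero]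
      · rw [Prod.swap, uu_comp_comm n hp]
        exact add_self_zero' _
    · intro p _ hp
      intro hswap
      apply hp
      obtain ⟨i, k⟩ := p
      have : k = i := congrArg Prod.fst hswap
      subst this
      rw [uu_comp_same, hνν, map_uu_zero]
    · intro p _; exact Finset.mem_univ _
    · intro p _; rfl
  -- conclude
  apply le_antisymm
  · intro x hx
    have hx0 : nuN n ν x = 0 := hx
    refine ⟨H x, ?_⟩
    have := congrArg (fun f => f x) key
    simp only [LinearMap.add_apply, LinearMap.comp_apply, LinearMap.id_apply] at this
    rw [hx0, map_zero, add_zero] at this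
    exact this
  · rintro x ⟨y, rfl⟩
    show nuN n ν (nuN n ν y) = 0
    have := congrArg (fun f => f y) sq0
    simpa using this
end
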